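/- For all natural numbers k and i with 1 ≤ k ≤ i, the number of i-bit binary signed-digit representations of 2^{k-1} + 1 equals (k-1) + (i-k)·k; that is, f(2^{k-1} + 1, i) = (k-1) + (i-k)·k. -/
import Mathlib

/-- Number of `i`-bit binary signed-digit representations of the integer `n`. -/
noncomputable def numBSD (n : ℤ) (i : ℕ) : ℕ :=
  Nat.card {b : Fin i → ℤ //
    (∀ j, b j = -1 ∨ b j = 0 ∨ b j = 1) ∧ n = ∑ j, b j * 2 ^ (j : ℕ)}

lemma bsd_finite (n : ℤ) (i : ℕ) :
    Finite {b : Fin i → ℤ //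
      (∀ j, b j = -1 ∨ b j = 0 ∨ b j = 1) ∧ n = ∑ j, b j * 2 ^ (j : ℕ)} := by
  have h : (Set.pi Set.univ (fun _ : Fin i => Set.Icc (-1:ℤ) 1)).Finite :=
    Set.Finite.pi fun _ => Set.finite_Icc _ _
  have hsub : {b : Fin i → ℤ | (∀ j, b j = -1 ∨ b j = 0 ∨ b j = 1) ∧
      n = ∑ j, b j * 2 ^ (j : ℕ)} ⊆ Set.pi Set.univ (fun _ : Fin i => Set.Icc (-1:ℤ) 1) := by
    intro b hb
    rw [Set.mem_pi]
    intro j _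
    rcases hb.1 j with h | h | h <;> simp [h]
  exact (h.subset hsub).to_subtype

lemma sum_split {i : ℕ} (b : Fin (i+1) → ℤ) :
    ∑ j, b j * 2 ^ (j:ℕ) = b 0 + 2 * ∑ j : Fin i, b j.succ * 2 ^ (j:ℕ) := by
  rw [Fin.sum_univ_succ, Finset.mul_sum]
  refine congrArg₂ _ (by simp) (Finset.sum_congr rfl fun j _ => ?_)
  rw [Fin.val_succ, pow_succ]
  ring

lemma bsd_even {n : ℤ} (hn : n % 2 = 0) (i : ℕ) :
    numBSD n (i+1) = numBSD (n/2) i := by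
  unfold numBSD
  refine (Nat.card_eq_of_bijective
    (fun c => ⟨Fin.cons 0 c.1, by
      intro j
      refine Fin.cases ?_ (fun j => ?_) j
      · simp
      · simpa using c.2.1 j, by
      rw [sum_split]
      simp only [Fin.cons_zero, Fin.cons_succ]
      rw [← c.2.2]
      omega⟩) ⟨?_, ?_⟩).symm
  · intro c1 c2 h
    have h' := congrArg Subtype.val h
    refine Subtype.ext (funext fun j => ?_)
    have := congrFun h' j.succ
    simpa using this
  · rintro ⟨b, hb1, hb2⟩
    rw [sum_split] at hb2
    have hb0 : b 0 = 0 := by rcases hb1 0 with h | h | h <;> omega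
    refine ⟨⟨fun j => b j.succ, fun j => hb1 j.succ, by beta_reduce; omega⟩, ?_⟩
    refine Subtype.ext (funext fun j => ?_)
    refine Fin.cases ?_ (fun j => ?_) j
    · simp [hb0]
    · simp

lemma bsd_odd {n : ℤ} (hn : n % 2 = 1) (i : ℕ) :
    numBSD n (i+1) = numBSD ((n-1)/2) i + numBSD ((n+1)/2) i := by
  unfold numBSD
  haveI := bsd_finite ((n-1)/2) i
  haveI := bsd_finite ((n+1)/2) i
  rw [← Nat.card_sum]
  refine (Nat.card_eq_of_bijective
    (Sum.elim
      (fun c => ⟨Fin.cons 1 c.1, by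
        intro j
        refine Fin.cases ?_ (fun j => ?_) j
        · simp
        · simpa using c.2.1 j, by
        rw [sum_split]
        simp only [Fin.cons_zero, Fin.cons_succ]
        rw [← c.2.2]
        omega⟩)
      (fun c => ⟨Fin.cons (-1) c.1, by
        intro j
        refine Fin.cases ?_ (fun j => ?_) j
        · simp
        · simpa using c.2.1 j, by
        rw [sum_split]
        simp only [Fin.cons_zero, Fin.cons_succ]
        rw [← c.2.2]
        omega⟩)) ⟨?_, ?_⟩).symm
  · rintro (c1 | c1) (c2 | c2) h <;>
      have h' := congrArg Subtype.val h <;>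
      have h0 := congrFun h' 0 <;>
      simp only [Sum.elim_inl, Sum.elim_inr, Fin.cons_zero] at h0 h' ⊢
    · refine congrArg _ (Subtype.ext (funext fun j => ?_))
      have := congrFun h' j.succ
      simpa using this
    · omega
    · omega
    · refine congrArg _ (Subtype.ext (funext fun j => ?_))
      have := congrFun h' j.succ
      simpa using this
  · rintro ⟨b, hb1, hb2⟩
    rw [sum_split] at hb2
    rcases hb1 0 with h0 | h0 | h0
    · refine ⟨Sum.inr ⟨fun j => b j.succ, fun j => hb1 j.succ, by beta_reduce; omega⟩, ?_⟩
      refine Subtype.ext (funext fun j => ?_)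
      refine Fin.cases ?_ (fun j => ?_) j
      · simp [h0]
      · simp
    · omega
    · refine ⟨Sum.inl ⟨fun j => b j.succ, fun j => hb1 j.succ, by beta_reduce; omega⟩, ?_⟩
      refine Subtype.ext (funext fun j => ?_)
      refine Fin.cases ?_ (fun j => ?_) j
      · simp [h0]
      · simp

lemma bsd_zero_zero : numBSD 0 0 = 1 := by
  unfold numBSD
  haveI : Unique {b : Fin 0 → ℤ //
      (∀ j, b j = -1 ∨ b j = 0 ∨ b j = 1) ∧ (0:ℤ) = ∑ j, b j * 2 ^ (j : ℕ)} :=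
    ⟨⟨⟨fun j => j.elim0, fun j => j.elim0, by simp⟩⟩,
      fun a => Subtype.ext (funext fun j => j.elim0)⟩
  exact Nat.card_unique

lemma bsd_ne_zero (n : ℤ) (h : n ≠ 0) : numBSD n 0 = 0 := by
  unfold numBSD
  haveI : IsEmpty {b : Fin 0 → ℤ //
      (∀ j, b j = -1 ∨ b j = 0 ∨ b j = 1) ∧ n = ∑ j, b j * 2 ^ (j : ℕ)} := by
    refine ⟨fun b => h ?_⟩
    have := b.2.2
    simpa using this
  exact Nat.card_of_isEmpty

lemma bsd_zero (i : ℕ) : numBSD 0 i = 1 := by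
  induction i with
  | zero => exact bsd_zero_zero
  | succ i ih =>
    have := bsd_even (n := 0) (by norm_num) i
    simpa [ih] using this

lemma bsd_one (i : ℕ) : numBSD 1 i = i := by
  induction i with
  | zero => exact bsd_ne_zero 1 one_ne_zero
  | succ i ih =>
    have := bsd_odd (n := 1) (by norm_num) i
    norm_num at this
    rw [this, bsd_zero, ih]
    omega

lemma bsd_pow (m : ℕ) : ∀ i : ℕ, m ≤ i → numBSD ((2:ℤ)^m) i = i - m := by
  induction m with
  | zero => intro i _; simpa using bsd_one i
  | succ m ih =>
    intro i hi
    obtain ⟨i, rfl⟩ : ∃ i', i = i' + 1 := ⟨i - 1, by omega⟩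
    have h2 : (2:ℤ)^(m+1) = 2 * 2^m := by ring
    have heven : (2:ℤ)^(m+1) % 2 = 0 := by rw [h2]; omega
    rw [bsd_even heven, h2, Int.mul_ediv_cancel_left _ (by norm_num), ih i (by omega)]
    omega

lemma bsd_main (k : ℕ) : ∀ i : ℕ, k + 1 ≤ i →
    numBSD ((2:ℤ)^k + 1) i = k + (i - (k+1)) * (k+1) := by
  induction k with
  | zero =>
    intro i hi
    obtain ⟨i, rfl⟩ : ∃ i', i = i' + 1 := ⟨i - 1, by omega⟩
    have : ((2:ℤ)^0 + 1) = 2 := by norm_num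
    rw [this, bsd_even (by norm_num) i]
    norm_num [bsd_one]
  | succ k ih =>
    intro i hi
    obtain ⟨i, rfl⟩ : ∃ i', i = i' + 1 := ⟨i - 1, by omega⟩
    set m : ℤ := 2^k with hm
    have h2 : (2:ℤ)^(k+1) + 1 = 2*m + 1 := by rw [hm]; ring
    have hodd : ((2:ℤ)^(k+1) + 1) % 2 = 1 := by omega
    have hd1 : ((2:ℤ)^(k+1) + 1 - 1)/2 = m := by omega
    have hd2 : ((2:ℤ)^(k+1) + 1 + 1)/2 = m + 1 := by omega
    rw [bsd_odd hodd, hd1, hd2, hm, bsd_pow k i (by omega), ih i (by omega)]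
    obtain ⟨t, rfl⟩ : ∃ t, i = k + 1 + t := ⟨i - (k+1), by omega⟩
    have e1 : k + 1 + t - k = t + 1 := by omega
    have e2 : k + 1 + t - (k + 1) = t := by omega
    have e3 : k + 1 + t + 1 - (k + 1 + 1) = t := by omega
    rw [e1, e2, e3]
    ring

theorem bsd_two_pow_add_one (k i : ℕ) (hk1 : 1 ≤ k) (hki : k ≤ i) :
    numBSD ((2 : ℤ) ^ (k - 1) + 1) i = (k - 1) + (i - k) * k := by
  obtain ⟨k, rfl⟩ : ∃ k', k = k' + 1 := ⟨k - 1, by omega⟩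
  simpa using bsd_main k i hki
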